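/- With notation as above, for any measurable A : M → SL(2,ℝ) over ergodic (f, μ), every F_A-invariant probability measure m on M × ℝP¹ projecting to μ satisfies −λ(A) ≤ ∫ φ_A dm ≤ λ(A), where λ(A) is the Lyapunov exponent and φ_A(x,[v]) = log(‖A(x)v‖/‖v‖). -/

import Mathlib

open Matrix MeasureTheory Set Filter Topology
open scoped ENNReal NNReal

noncomputable section

abbrev E2 := EuclideanSpace ℝ (Fin 2)
abbrev SL2 := Matrix.SpecialLinearGroup (Fin 2) ℝ

/-- The real projective line, with the quotient topology. -/
abbrev RP1 := Projectivization ℝ E2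

instance : TopologicalSpace RP1 :=
  inferInstanceAs (TopologicalSpace (Quotient (projectivizationSetoid ℝ E2)))
instance : MeasurableSpace RP1 := borel _
instance : BorelSpace RP1 := ⟨rfl⟩

/-- An element of `SL(2,ℝ)` as a continuous linear operator of Euclidean `ℝ²`. -/
def sl2CLM (A : SL2) : E2 →L[ℝ] E2 :=
  Matrix.toEuclideanCLM (𝕜 := ℝ) (A : Matrix (Fin 2) (Fin 2) ℝ)

theorem sl2CLM_injective (A : SL2) : Function.Injective (sl2CLM A) := by
  intro v w hvw
  have h2 := congrArg (sl2CLM A⁻¹) hvw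
  simp only [sl2CLM] at h2
  rw [← ContinuousLinearMap.comp_apply, ← ContinuousLinearMap.comp_apply,
    ← ContinuousLinearMap.mul_def, ← _root_.map_mul] at h2
  have h3 : ((A⁻¹ : SL2) : Matrix (Fin 2) (Fin 2) ℝ) * (A : Matrix (Fin 2) (Fin 2) ℝ) = 1 := by
    rw [← Matrix.SpecialLinearGroup.coe_mul, inv_mul_cancel, Matrix.SpecialLinearGroup.coe_one]
  rw [h3] at h2
  simpa using h2

/-- Projective action of `SL(2,ℝ)` on the real projective line. -/
def projAction (A : SL2) : RP1 → RP1 :=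
  Projectivization.map ((sl2CLM A) : E2 →ₗ[ℝ] E2) (sl2CLM_injective A)

variable {M : Type*}

/-- The matrix cocycle `Aⁿ(x) = A(f^{n-1}x) ⋯ A(x)`. -/
def sl2Cocycle (f : M → M) (A : M → SL2) : ℕ → M → SL2
  | 0, _ => 1
  | n + 1, x => sl2Cocycle f A n (f x) * A x

/-- The projective cocycle `F_A(x,[v]) = (f(x), [A(x)v])`. -/
def projCocycle (f : M → M) (A : M → SL2) : M × RP1 → M × RP1 :=
  fun p => (f p.1, projAction (A p.1) p.2)

/-- `φ_A(x,[v]) = log (‖A(x)v‖ / ‖v‖)`, computed on a representative of `[v]`. -/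
def phiA (A : M → SL2) : M × RP1 → ℝ :=
  fun p => Real.log (‖sl2CLM (A p.1) p.2.rep‖ / ‖p.2.rep‖)

/-!
Along the projective cocycle the Birkhoff sums of `φ_A` telescope:
`Sₙφ_A(x,[v]) = log (‖Aⁿ(x)v‖ / ‖v‖)`, which lies between `-log ‖Aⁿ(x)⁻¹‖` and `log ‖Aⁿ(x)‖`;
on `SL(2,ℝ)` these two norms agree, since `S⁻¹` is `Sᵀ` conjugated by a rotation. Integrating
against the invariant measure `m`, whose first marginal is `μ`, gives
`n |∫ φ_A dm| ≤ ∫ log ‖Aⁿ‖ dμ`. Finally `(1/n) log ‖Aⁿ‖ → λ(A)` a.e. and is dominated by the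
Birkhoff averages of `log ‖A‖`, which are uniformly integrable, so by Vitali's convergence theorem
`(1/n) ∫ log ‖Aⁿ‖ dμ → λ(A)`.
-/

namespace MeasureTheory

variable {X : Type*} [MeasurableSpace X] {μ : Measure X}

lemma UnifIntegrable.mono {ι β γ : Type*} [NormedAddCommGroup β] [NormedAddCommGroup γ]
    {f : ι → X → β} {g : ι → X → γ} {p : ℝ≥0∞} (hg : UnifIntegrable g p μ)
    (hfg : ∀ i, ∀ᵐ x ∂μ, ‖f i x‖ ≤ ‖g i x‖) : UnifIntegrable f p μ := by
  intro ε hε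
  obtain ⟨δ, hδ, hgδ⟩ := hg hε
  refine ⟨δ, hδ, fun i s hs hμs => (eLpNorm_mono_ae ?_).trans (hgδ i s hs hμs)⟩
  filter_upwards [hfg i] with x hx
  by_cases hxs : x ∈ s <;> simp [hxs, hx]

namespace MeasurePreserving

variable {Y : Type*} [MeasurableSpace Y] {ν : Measure Y}
  {E : Type*} [NormedAddCommGroup E]

lemma integral_comp_of_aestronglyMeasurable [NormedSpace ℝ E] {T : X → Y}
    (hT : MeasurePreserving T μ ν) {g : Y → E} (hg : AEStronglyMeasurable g ν) :
    ∫ x, g (T x) ∂μ = ∫ y, g y ∂ν := by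
  rw [← hT.map_eq] at hg ⊢
  exact (integral_map hT.measurable.aemeasurable hg).symm

variable {T : X → X} (hT : MeasurePreserving T μ μ) {g : X → E}
include hT

lemma integrable_birkhoffSum (hg : Integrable g μ) (n : ℕ) : Integrable (birkhoffSum T g n) μ :=
  integrable_finsetSum _ fun k _ => (hT.iterate k).integrable_comp_of_integrable hg

lemma integral_birkhoffSum [NormedSpace ℝ E] (hg : Integrable g μ) (n : ℕ) :
    ∫ x, birkhoffSum T g n x ∂μ = n • ∫ x, g x ∂μ := by
  simp only [birkhoffSum]
  rw [integral_finsetSum (f := fun k x => g (T^[k] x)) _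
    fun k _ => (hT.iterate k).integrable_comp_of_integrable hg]
  simp [(hT.iterate _).integral_comp_of_aestronglyMeasurable hg.aestronglyMeasurable]

lemma uniformIntegrable_birkhoffAverage [IsFiniteMeasure μ] [NormedSpace ℝ E]
    [MeasurableSpace E] [BorelSpace E] (hg : Integrable g μ) :
    UniformIntegrable (birkhoffAverage ℝ T g) 1 μ := by
  have hident : ∀ k, ProbabilityTheory.IdentDistrib (g ∘ T^[k]) (g ∘ T^[0]) μ μ := fun k =>
    { aemeasurable_fst := hg.aemeasurable.comp_quasiMeasurePreserving
        (hT.iterate k).quasiMeasurePreserving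
      aemeasurable_snd := hg.aemeasurable
      map_eq := by
        rw [← AEMeasurable.map_map_of_aemeasurable
          (by rw [(hT.iterate k).map_eq]; exact hg.aemeasurable)
          (hT.iterate k).measurable.aemeasurable, (hT.iterate k).map_eq]
        rfl }
  have hui := uniformIntegrable_average le_rfl <|
    ProbabilityTheory.MemLp.uniformIntegrable_of_identDistrib le_rfl ENNReal.one_ne_top
      (memLp_one_iff_integrable.2 hg) hident
  convert hui using 2 with n
  ext x
  simp [birkhoffAverage, birkhoffSum]

lemma tendsto_integral_of_abs_le_birkhoffSum [IsProbabilityMeasure μ] {ψ : X → ℝ}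
    (hψ : Integrable ψ μ) {F : ℕ → X → ℝ} (hF : ∀ n, AEStronglyMeasurable (F n) μ)
    (hFψ : ∀ n x, |F n x| ≤ birkhoffSum T ψ n x) {l : ℝ}
    (hlim : ∀ᵐ x ∂μ, Tendsto (fun n : ℕ => (n : ℝ)⁻¹ * F n x) atTop (𝓝 l)) :
    Tendsto (fun n : ℕ => (n : ℝ)⁻¹ * ∫ x, F n x ∂μ) atTop (𝓝 l) := by
  have hFint : ∀ n, Integrable (F n) μ := fun n =>
    (hT.integrable_birkhoffSum hψ n).mono' (hF n) (ae_of_all _ (hFψ n))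
  have hui : UnifIntegrable (fun (n : ℕ) x => (n : ℝ)⁻¹ * F n x) 1 μ := by
    refine (hT.uniformIntegrable_birkhoffAverage hψ).unifIntegrable.mono fun n => ae_of_all _ ?_
    intro x
    have hS : 0 ≤ birkhoffSum T ψ n x := (abs_nonneg _).trans (hFψ n x)
    rw [birkhoffAverage, smul_eq_mul, norm_mul, norm_mul, Real.norm_of_nonneg hS]
    exact mul_le_mul_of_nonneg_left (hFψ n x) (norm_nonneg _)
  have hL1 := tendsto_Lp_finite_of_tendsto_ae le_rfl ENNReal.one_ne_top
    (fun n => (hF n).const_mul _) (memLp_const l) hui hlim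
  simp only [eLpNorm_one_eq_lintegral_enorm] at hL1
  have h := tendsto_integral_of_L1 _ aestronglyMeasurable_const
    (Eventually.of_forall fun n => (hFint n).const_mul _) hL1
  simpa [integral_const_mul] using h

end MeasurePreserving

end MeasureTheory

namespace SL2

lemma sl2CLM_mul (S T : SL2) : sl2CLM (S * T) = sl2CLM S * sl2CLM T := by
  rw [sl2CLM, Matrix.SpecialLinearGroup.coe_mul, map_mul]; rfl

lemma sl2CLM_one : sl2CLM 1 = 1 := by
  rw [sl2CLM, Matrix.SpecialLinearGroup.coe_one, map_one]

def rotation : Matrix (Fin 2) (Fin 2) ℝ := !![0, -1; 1, 0]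

lemma rotation_mem_unitary : rotation ∈ unitary (Matrix (Fin 2) (Fin 2) ℝ) := by
  rw [← Matrix.unitaryGroup, Matrix.mem_unitaryGroup_iff]
  ext i j
  fin_cases i <;> fin_cases j <;> simp [rotation, Matrix.mul_apply, Fin.sum_univ_two]

lemma coe_inv_eq_rotation_conj (S : SL2) :
    ((S⁻¹ : SL2) : Matrix (Fin 2) (Fin 2) ℝ) =
      rotation * star (S : Matrix (Fin 2) (Fin 2) ℝ) * star rotation := by
  rw [Matrix.SpecialLinearGroup.coe_inv, Matrix.adjugate_fin_two]
  ext i j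
  fin_cases i <;> fin_cases j <;>
    simp [rotation, Matrix.mul_apply, Matrix.vecMul, dotProduct, Fin.sum_univ_two]

lemma norm_sl2CLM_inv (S : SL2) : ‖sl2CLM S⁻¹‖ = ‖sl2CLM S‖ := by
  have hU := Unitary.map_mem (Matrix.toEuclideanCLM (𝕜 := ℝ) (n := Fin 2)) rotation_mem_unitary
  unfold sl2CLM
  rw [coe_inv_eq_rotation_conj, map_mul, map_mul, map_star, map_star,
    CStarRing.norm_mul_mem_unitary _ (Unitary.star_mem hU), CStarRing.norm_mem_unitary_mul _ hU]
  exact norm_star (E := E2 →L[ℝ] E2) _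

lemma one_le_norm_sl2CLM (S : SL2) : 1 ≤ ‖sl2CLM S‖ := by
  have h : 1 ≤ ‖sl2CLM S‖ * ‖sl2CLM S⁻¹‖ := by
    simpa [← sl2CLM_mul, sl2CLM_one] using norm_mul_le (sl2CLM S) (sl2CLM S⁻¹)
  rw [norm_sl2CLM_inv] at h
  nlinarith [norm_nonneg (sl2CLM S)]

lemma log_norm_sl2CLM_mul_le (S T : SL2) :
    Real.log ‖sl2CLM (S * T)‖ ≤ Real.log ‖sl2CLM S‖ + Real.log ‖sl2CLM T‖ := by
  have hS := one_le_norm_sl2CLM S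
  have hT := one_le_norm_sl2CLM T
  rw [← Real.log_mul (by positivity) (by positivity)]
  refine Real.log_le_log (by linarith [one_le_norm_sl2CLM (S * T)]) ?_
  rw [sl2CLM_mul]
  exact norm_mul_le _ _

lemma sl2CLM_apply_ne_zero (S : SL2) {w : E2} (hw : w ≠ 0) : sl2CLM S w ≠ 0 :=
  (map_ne_zero_iff _ (sl2CLM_injective S)).2 hw

lemma projAction_mk (S : SL2) {w : E2} (hw : w ≠ 0) :
    projAction S (Projectivization.mk ℝ w hw) =
      Projectivization.mk ℝ (sl2CLM S w) (sl2CLM_apply_ne_zero S hw) :=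
  Projectivization.map_mk _ _ _ _

def logExpansion (S : SL2) (v : RP1) : ℝ := Real.log (‖sl2CLM S v.rep‖ / ‖v.rep‖)

lemma logExpansion_mk (S : SL2) {w : E2} (hw : w ≠ 0) :
    logExpansion S (Projectivization.mk ℝ w hw) = Real.log (‖sl2CLM S w‖ / ‖w‖) := by
  obtain ⟨a, ha⟩ := Projectivization.exists_smul_eq_mk_rep ℝ w hw
  rw [logExpansion, ← ha, Units.smul_def, map_smul, norm_smul, norm_smul,
    mul_div_mul_left _ _ (norm_ne_zero_iff.2 a.ne_zero)]

lemma logExpansion_one (v : RP1) : logExpansion 1 v = 0 := by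
  rw [logExpansion, sl2CLM_one, one_apply_eq_self,
    div_self (norm_ne_zero_iff.2 v.rep_nonzero), Real.log_one]

lemma logExpansion_mul (S T : SL2) (v : RP1) :
    logExpansion (S * T) v = logExpansion S (projAction T v) + logExpansion T v := by
  induction v using Projectivization.ind with
  | h w hw =>
    have hTw := sl2CLM_apply_ne_zero T hw
    rw [projAction_mk, logExpansion_mk, logExpansion_mk, logExpansion_mk, sl2CLM_mul,
      mul_apply_eq_comp, ← Real.log_mul (by simp [sl2CLM_apply_ne_zero S hTw, hTw])
        (by simp [hTw, hw]), div_mul_div_cancel₀ (norm_ne_zero_iff.2 hTw)]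

lemma logExpansion_le (S : SL2) (v : RP1) : logExpansion S v ≤ Real.log ‖sl2CLM S‖ := by
  have hv := norm_pos_iff.2 v.rep_nonzero
  refine Real.log_le_log (div_pos (norm_pos_iff.2 (sl2CLM_apply_ne_zero S v.rep_nonzero)) hv) ?_
  exact div_le_of_le_mul₀ hv.le (norm_nonneg _) ((sl2CLM S).le_opNorm _)

lemma abs_logExpansion_le (S : SL2) (v : RP1) : |logExpansion S v| ≤ Real.log ‖sl2CLM S‖ := by
  have hinv : -logExpansion S v = logExpansion S⁻¹ (projAction S v) := by
    have h := logExpansion_mul S⁻¹ S v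
    rw [inv_mul_cancel, logExpansion_one] at h
    linarith
  refine abs_le.2 ⟨?_, logExpansion_le S v⟩
  have := logExpansion_le S⁻¹ (projAction S v)
  rw [← hinv, norm_sl2CLM_inv] at this
  linarith

end SL2

section Cocycle

variable {M : Type*} (f : M → M) (A : M → SL2)

open SL2

lemma birkhoffSum_phiA (n : ℕ) (x : M) (v : RP1) :
    birkhoffSum (projCocycle f A) (phiA A) n (x, v) = logExpansion (sl2Cocycle f A n x) v := by
  induction n generalizing x v with
  | zero => simp [sl2Cocycle, logExpansion_one]
  | succ n ih =>
    rw [birkhoffSum_succ', sl2Cocycle, logExpansion_mul, add_comm, ← ih]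
    rfl

lemma abs_log_norm_sl2Cocycle_le_birkhoffSum (n : ℕ) (x : M) :
    |Real.log ‖sl2CLM (sl2Cocycle f A n x)‖| ≤
      birkhoffSum f (fun y => Real.log ‖sl2CLM (A y)‖) n x := by
  rw [abs_of_nonneg (Real.log_nonneg (one_le_norm_sl2CLM _))]
  induction n generalizing x with
  | zero => simp [sl2Cocycle, sl2CLM_one]
  | succ n ih =>
    rw [birkhoffSum_succ', sl2Cocycle]
    linarith [log_norm_sl2CLM_mul_le (sl2Cocycle f A n (f x)) (A x), ih (f x)]

end Cocycle

namespace RP1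

open Projectivization

lemma isOpenMap_mk' : IsOpenMap (mk' ℝ : {v : E2 // v ≠ 0} → RP1) := by
  intro U hU
  have hpre : mk' ℝ ⁻¹' (mk' ℝ '' U) =
      ⋃ c : ℝˣ, (fun w : {v : E2 // v ≠ 0} => (⟨c • w.1, (smul_ne_zero_iff_ne c).2 w.2⟩ :
        {v : E2 // v ≠ 0})) ⁻¹' U := by
    ext w
    simp only [Set.mem_preimage, Set.mem_image, Set.mem_iUnion, mk'_eq_mk, mk_eq_mk_iff]
    constructor
    · rintro ⟨u, hu, c, hc⟩
      exact ⟨c, by convert hu using 1; exact Subtype.ext hc⟩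
    · rintro ⟨c, hc⟩
      exact ⟨_, hc, c, rfl⟩
  have hq : IsQuotientMap (mk' ℝ : {v : E2 // v ≠ 0} → RP1) := isQuotientMap_quotient_mk'
  rw [← hq.isOpen_preimage, hpre]
  exact isOpen_iUnion fun c => hU.preimage ((continuous_subtype_val.const_smul c).subtype_mk _)

lemma continuous_of_continuous_comp_mk' {Z W : Type*} [TopologicalSpace Z] [TopologicalSpace W]
    {g : Z × RP1 → W} (hg : Continuous fun p : Z × {v : E2 // v ≠ 0} => g (p.1, mk' ℝ p.2)) :
    Continuous g :=
  ((IsOpenQuotientMap.id.prodMap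
    ⟨Quot.mk_surjective, continuous_quot_mk, isOpenMap_mk'⟩).isQuotientMap.continuous_iff).2 hg

lemma continuous_norm_apply_rep_div_norm_rep :
    Continuous fun q : (E2 →L[ℝ] E2) × RP1 => ‖q.1 q.2.rep‖ / ‖q.2.rep‖ := by
  refine continuous_of_continuous_comp_mk' ?_
  have heq : ∀ (B : E2 →L[ℝ] E2) (w : {v : E2 // v ≠ 0}),
      ‖B (mk' ℝ w).rep‖ / ‖(mk' ℝ w).rep‖ = ‖B w.1‖ / ‖w.1‖ := by
    intro B w
    obtain ⟨a, ha⟩ := exists_smul_eq_mk_rep ℝ w.1 w.2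
    rw [mk'_eq_mk, ← ha, Units.smul_def, map_smul, norm_smul, norm_smul,
      mul_div_mul_left _ _ (norm_ne_zero_iff.2 a.ne_zero)]
  simp only [heq]
  refine Continuous.div ?_ (continuous_subtype_val.comp continuous_snd).norm
    fun p => norm_ne_zero_iff.2 p.2.2
  exact (isBoundedBilinearMap_apply.continuous.comp
    (continuous_fst.prodMk (continuous_subtype_val.comp continuous_snd))).norm

lemma continuous_uncurry_map :
    Continuous fun q : {B : E2 →L[ℝ] E2 // Function.Injective B} × RP1 =>
      Projectivization.map (q.1.1 : E2 →ₗ[ℝ] E2) q.1.2 q.2 := by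
  refine continuous_of_continuous_comp_mk' ?_
  simp only [mk'_eq_mk, map_mk]
  refine continuous_quot_mk.comp (Continuous.subtype_mk ?_ _)
  exact isBoundedBilinearMap_apply.continuous.comp
    ((continuous_subtype_val.comp continuous_fst).prodMk
      (continuous_subtype_val.comp continuous_snd))

end RP1

section Measurability

variable {M : Type*} [MeasurableSpace M] {A : M → SL2}

lemma measurable_phiA (hA : Measurable fun x => sl2CLM (A x)) : Measurable (phiA A) :=
  (RP1.continuous_norm_apply_rep_div_norm_rep.measurable.comp
    ((hA.comp measurable_fst).prodMk measurable_snd)).log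

lemma measurable_projCocycle {f : M → M} (hf : Measurable f)
    (hA : Measurable fun x => sl2CLM (A x)) : Measurable (projCocycle f A) :=
  (hf.comp measurable_fst).prodMk <| RP1.continuous_uncurry_map.measurable.comp
    (((hA.comp measurable_fst).subtype_mk
      (h := fun p => sl2CLM_injective (A p.1))).prodMk measurable_snd)

end Measurability

section Integral

open SL2

variable {M : Type*} [MeasurableSpace M] {μ : Measure M} {f : M → M} {A : M → SL2}

lemma measurable_sl2Cocycle (hf : Measurable f) (hA : Measurable fun x => sl2CLM (A x))
    (n : ℕ) : Measurable fun x => sl2CLM (sl2Cocycle f A n x) := by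
  induction n with
  | zero => simp [sl2Cocycle, sl2CLM_one]
  | succ n ih =>
    simp only [sl2Cocycle, sl2CLM_mul]
    exact (ih.comp hf).mul hA

lemma natCast_mul_abs_integral_phiA_le (hf : MeasurePreserving f μ μ)
    (hA : Measurable fun x => sl2CLM (A x))
    (hint : Integrable (fun x => Real.log ‖sl2CLM (A x)‖) μ) {m : Measure (M × RP1)}
    (hproj : m.map Prod.fst = μ) (hminv : m.map (projCocycle f A) = m) (n : ℕ) :
    n * |∫ p, phiA A p ∂m| ≤ ∫ x, Real.log ‖sl2CLM (sl2Cocycle f A n x)‖ ∂μ := by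
  have hfst : MeasurePreserving Prod.fst m μ := ⟨measurable_fst, hproj⟩
  have hF : MeasurePreserving (projCocycle f A) m m :=
    ⟨measurable_projCocycle hf.measurable hA, hminv⟩
  have hC : Integrable (fun x => Real.log ‖sl2CLM (sl2Cocycle f A n x)‖) μ :=
    (hf.integrable_birkhoffSum hint n).mono'
      (measurable_sl2Cocycle hf.measurable hA n).norm.log.aestronglyMeasurable
      (ae_of_all _ (abs_log_norm_sl2Cocycle_le_birkhoffSum f A n))
  have hφ : Integrable (phiA A) m :=
    (hfst.integrable_comp_of_integrable hint).mono' (measurable_phiA hA).aestronglyMeasurable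
      (ae_of_all _ fun p => abs_logExpansion_le (A p.1) p.2)
  calc n * |∫ p, phiA A p ∂m| = |∫ p, birkhoffSum (projCocycle f A) (phiA A) n p ∂m| := by
        rw [hF.integral_birkhoffSum hφ, nsmul_eq_mul, abs_mul, Nat.abs_cast]
    _ ≤ ∫ p, |birkhoffSum (projCocycle f A) (phiA A) n p| ∂m := abs_integral_le_integral_abs
    _ ≤ ∫ p, Real.log ‖sl2CLM (sl2Cocycle f A n p.1)‖ ∂m := by
        refine integral_mono (hF.integrable_birkhoffSum hφ n).abs
          (hfst.integrable_comp_of_integrable hC) fun p => ?_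
        rw [birkhoffSum_phiA]
        exact abs_logExpansion_le _ _
    _ = ∫ x, Real.log ‖sl2CLM (sl2Cocycle f A n x)‖ ∂μ :=
        hfst.integral_comp_of_aestronglyMeasurable hC.aestronglyMeasurable

end Integral

theorem integral_phi_bounds_general {M : Type*} [MeasurableSpace M]
    (μ : Measure M) [IsProbabilityMeasure μ] (f : M → M) (hf : Ergodic f μ)
    (A : M → SL2) (hA : Measurable fun x => sl2CLM (A x))
    (hint : Integrable (fun x => Real.log ‖sl2CLM (A x)‖) μ)
    (lamA : ℝ)
    (hlam : ∀ᵐ x ∂μ, Tendsto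
      (fun n : ℕ => (n : ℝ)⁻¹ * Real.log ‖sl2CLM (sl2Cocycle f A n x)‖) atTop (𝓝 lamA))
    (m : Measure (M × RP1))
    (hproj : m.map Prod.fst = μ) (hminv : m.map (projCocycle f A) = m) :
    -lamA ≤ ∫ p, phiA A p ∂m ∧ ∫ p, phiA A p ∂m ≤ lamA := by
  have hμ := hf.toMeasurePreserving
  have hlim := hμ.tendsto_integral_of_abs_le_birkhoffSum hint
    (fun n => (measurable_sl2Cocycle hμ.measurable hA n).norm.log.aestronglyMeasurable)
    (abs_log_norm_sl2Cocycle_le_birkhoffSum f A) hlam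
  refine abs_le.1 (ge_of_tendsto hlim (eventually_atTop.2 ⟨1, fun n hn => ?_⟩))
  rw [le_inv_mul_iff₀ (by exact_mod_cast hn)]
  exact natCast_mul_abs_integral_phiA_le hμ hA hint hproj hminv n

/-- For measurable `A : M → SL(2,ℝ)` over an ergodic `(f,μ)` with
`log‖A‖` integrable and Lyapunov exponent `λ(A)` (the a.e. limit of both `(1/n)log‖Aⁿ(x)‖`
and `(1/n)log‖Aⁿ(x)⁻¹‖`), every `F_A`-invariant probability measure `m` on `M × ℝP¹`
projecting to `μ` satisfies `−λ(A) ≤ ∫ φ_A dm ≤ λ(A)`. -/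
theorem integral_phi_bounds {M : Type*} [MeasurableSpace M]
    (μ : Measure M) [IsProbabilityMeasure μ] (f : M → M) (hf : Ergodic f μ)
    (A : M → SL2) (hA : Measurable fun x => sl2CLM (A x))
    (hint : Integrable (fun x => Real.log ‖sl2CLM (A x)‖) μ)
    (lamA : ℝ)
    (hlam : ∀ᵐ x ∂μ, Tendsto
      (fun n : ℕ => (n : ℝ)⁻¹ * Real.log ‖sl2CLM (sl2Cocycle f A n x)‖) atTop (𝓝 lamA))
    (hlaminv : ∀ᵐ x ∂μ, Tendsto
      (fun n : ℕ => (n : ℝ)⁻¹ * Real.log ‖sl2CLM (sl2Cocycle f A n x)⁻¹‖) atTop (𝓝 lamA))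
    (m : Measure (M × RP1)) [IsProbabilityMeasure m]
    (hproj : m.map Prod.fst = μ) (hminv : m.map (projCocycle f A) = m) :
    -lamA ≤ ∫ p, phiA A p ∂m ∧ ∫ p, phiA A p ∂m ≤ lamA :=
  integral_phi_bounds_general μ f hf A hA hint lamA hlam m hproj hminv
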